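/- arXiv:2404.07460 — 4 statements merged into one kernel-verified Lean document; each statement's English description precedes it below -/
import Mathlib

section
/- Let r : R^n → R be convex, f : R^n → R differentiable with ∇f Lipschitz with constant L_g, and c : R^n → R^m differentiable with Jacobian Lipschitz with constant L_J (in the sense that ‖c(x+ts) - c(x) - t J(x)s‖₂ ≤ (L_J/2) t² ‖s‖₂²). Then for any τ > 0, x, s ∈ R^n, the directional derivative of Φ_τ(x) := τ(f(x)+r(x)) + ‖c(x)‖₂ at x in direction s satisfies D_{Φ_τ}(x,s) ≤ τ(∇f(x)^T s + r(x+s) - r(x)) + ‖c(x) + J(x)s‖₂ - ‖c(x)‖₂. -/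
/-!
For `t ∈ (0, 1]`, convexity gives `r (x + t • s) - r x ≤ t * (r (x + s) - r x)`, and the
triangle inequality through the linearization `c x + t • J s`, together with convexity of the
norm along the segment from `c x` to `c x + J s`, gives
`‖c (x + t • s)‖ - ‖c x‖ ≤ t * (‖c x + J s‖ - ‖c x‖) + O(t²)`. Dividing by `t`, the difference
quotient of the merit function is bounded by one whose limit as `t → 0⁺` is the claimed bound.
-/

open scoped RealInnerProductSpace Topology
open Filter Set

section Estimates

variable {E F : Type*} [AddCommGroup E] [Module ℝ E]

theorem ConvexOn.sub_le_mul_sub {r : E → ℝ} (hr : ConvexOn ℝ univ r) (x s : E) {t : ℝ}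
    (ht0 : 0 ≤ t) (ht1 : t ≤ 1) : r (x + t • s) - r x ≤ t * (r (x + s) - r x) := by
  have h := hr.2 (mem_univ x) (mem_univ (x + s)) (sub_nonneg.mpr ht1) ht0 (by ring)
  rw [show (1 - t) • x + t • (x + s) = x + t • s by module, smul_eq_mul, smul_eq_mul] at h
  linarith

theorem norm_sub_norm_le_mul_add_norm_sub [NormedAddCommGroup F] [NormedSpace ℝ F]
    (a b u : F) {t : ℝ} (ht0 : 0 ≤ t) (ht1 : t ≤ 1) :
    ‖u‖ - ‖a‖ ≤ t * (‖a + b‖ - ‖a‖) + ‖u - a - t • b‖ := by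
  have hconv := convexOn_univ_norm.sub_le_mul_sub a b ht0 ht1
  have htri : ‖u‖ ≤ ‖a + t • b‖ + ‖u - a - t • b‖ := by
    simpa [sub_sub] using norm_le_norm_add_norm_sub' u (a + t • b)
  linarith

end Estimates

theorem HasGradientAt.tendsto_div_sub_nhdsGT {E : Type*} [NormedAddCommGroup E]
    [InnerProductSpace ℝ E] [CompleteSpace E] {f : E → ℝ} {g x : E} (hf : HasGradientAt f g x)
    (s : E) : Tendsto (fun t : ℝ => (f (x + t • s) - f x) / t) (𝓝[>] 0) (𝓝 ⟪g, s⟫) := by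
  have hline : HasDerivAt (fun t : ℝ => x + t • s) s 0 := by
    simpa using ((hasDerivAt_id (0 : ℝ)).smul_const s).const_add x
  have hf' : HasFDerivAt f (InnerProductSpace.toDual ℝ E g) (x + (0 : ℝ) • s) := by
    simpa using hf.hasFDerivAt
  simpa [div_eq_inv_mul] using (hf'.comp_hasDerivAt 0 hline).tendsto_slope_zero_right

theorem merit_slope_le {E F : Type*} [AddCommGroup E] [Module ℝ E] [NormedAddCommGroup F]
    [NormedSpace ℝ F] {f r : E → ℝ} {c : E → F} (hr : ConvexOn ℝ univ r) (x s : E) (L : F)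
    {K τ t : ℝ} (hτ : 0 ≤ τ) (ht0 : 0 < t) (ht1 : t ≤ 1)
    (hc : ‖c (x + t • s) - c x - t • L‖ ≤ K * t ^ 2) :
    ((τ * (f (x + t • s) + r (x + t • s)) + ‖c (x + t • s)‖) - (τ * (f x + r x) + ‖c x‖)) / t
      ≤ τ * ((f (x + t • s) - f x) / t) + τ * (r (x + s) - r x) + (‖c x + L‖ - ‖c x‖)
        + K * t := by
  have hr' := mul_le_mul_of_nonneg_left (hr.sub_le_mul_sub x s ht0.le ht1) hτ
  have hc' := norm_sub_norm_le_mul_add_norm_sub (c x) L (c (x + t • s)) ht0.le ht1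
  have hf : τ * ((f (x + t • s) - f x) / t) * t = τ * (f (x + t • s) - f x) := by
    field_simp
  rw [div_le_iff₀ ht0]
  linarith

theorem merit_directional_derivative_bound_general
    {m n : ℕ}
    (f : EuclideanSpace ℝ (Fin n) → ℝ) (gf : EuclideanSpace ℝ (Fin n) → EuclideanSpace ℝ (Fin n))
    (r : EuclideanSpace ℝ (Fin n) → ℝ)
    (c : EuclideanSpace ℝ (Fin n) → EuclideanSpace ℝ (Fin m))
    (Jx : Matrix (Fin m) (Fin n) ℝ)
    (LJ : ℝ)
    (τ : ℝ) (hτ : 0 < τ)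
    (x s : EuclideanSpace ℝ (Fin n))
    (hr : ConvexOn ℝ Set.univ r)
    (hgrad : ∀ y, HasGradientAt f (gf y) y)
    (hJLip : ∀ t : ℝ, 0 ≤ t → t ≤ 1 →
      ‖c (x + t • s) - c x - t • Matrix.toEuclideanLin Jx s‖ ≤ (LJ / 2) * t ^ 2 * ‖s‖ ^ 2)
    (D : ℝ)
    (hD : Filter.Tendsto
      (fun t : ℝ => ((τ * (f (x + t • s) + r (x + t • s)) + ‖c (x + t • s)‖)
        - (τ * (f x + r x) + ‖c x‖)) / t)
      (nhdsWithin 0 (Set.Ioi 0)) (nhds D)) :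
    D ≤ τ * (⟪gf x, s⟫ + r (x + s) - r x) + ‖c x + Matrix.toEuclideanLin Jx s‖ - ‖c x‖ := by
  set L := Matrix.toEuclideanLin Jx s
  set K := LJ / 2 * ‖s‖ ^ 2
  have hbound : ∀ᶠ t in 𝓝[>] 0,
      ((τ * (f (x + t • s) + r (x + t • s)) + ‖c (x + t • s)‖) - (τ * (f x + r x) + ‖c x‖)) / t
        ≤ τ * ((f (x + t • s) - f x) / t) + τ * (r (x + s) - r x) + (‖c x + L‖ - ‖c x‖)
          + K * t := by
    filter_upwards [Ioc_mem_nhdsGT zero_lt_one] with t ⟨ht0, ht1⟩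
    refine merit_slope_le hr x s L hτ.le ht0 ht1 ((hJLip t ht0.le ht1).trans_eq ?_)
    ring
  have hK : Tendsto (fun t : ℝ => K * t) (𝓝[>] 0) (𝓝 (K * 0)) :=
    ((continuous_const_mul K).tendsto 0).mono_left nhdsWithin_le_nhds
  have hlim := ((((hgrad x).tendsto_div_sub_nhdsGT s).const_mul τ).add_const
    (τ * (r (x + s) - r x))).add_const (‖c x + L‖ - ‖c x‖) |>.add hK
  linarith [le_of_tendsto_of_tendsto hD hlim hbound]

/-- bound on the directional derivative of the ℓ₂ merit function. -/
theorem merit_directional_derivative_bound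
    {m n : ℕ}
    (f : EuclideanSpace ℝ (Fin n) → ℝ) (gf : EuclideanSpace ℝ (Fin n) → EuclideanSpace ℝ (Fin n))
    (r : EuclideanSpace ℝ (Fin n) → ℝ)
    (c : EuclideanSpace ℝ (Fin n) → EuclideanSpace ℝ (Fin m))
    (Jx : Matrix (Fin m) (Fin n) ℝ)
    (Lg LJ : ℝ) (hLg : 0 < Lg) (hLJ : 0 < LJ)
    (τ : ℝ) (hτ : 0 < τ)
    (x s : EuclideanSpace ℝ (Fin n))
    (hr : ConvexOn ℝ Set.univ r)
    (hgrad : ∀ y, HasGradientAt f (gf y) y)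
    (hgradLip : ∀ y z : EuclideanSpace ℝ (Fin n), ‖gf y - gf z‖ ≤ Lg * ‖y - z‖)
    (hJLip : ∀ t : ℝ, 0 ≤ t → t ≤ 1 →
      ‖c (x + t • s) - c x - t • Matrix.toEuclideanLin Jx s‖ ≤ (LJ / 2) * t ^ 2 * ‖s‖ ^ 2)
    (D : ℝ)
    (hD : Filter.Tendsto
      (fun t : ℝ => ((τ * (f (x + t • s) + r (x + t • s)) + ‖c (x + t • s)‖)
        - (τ * (f x + r x) + ‖c x‖)) / t)
      (nhdsWithin 0 (Set.Ioi 0)) (nhds D)) :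
    D ≤ τ * (⟪gf x, s⟫ + r (x + s) - r x) + ‖c x + Matrix.toEuclideanLin Jx s‖ - ‖c x‖ :=
  merit_directional_derivative_bound_general f gf r c Jx LJ τ hτ x s hr hgrad hJLip D hD
end

section
/- Let g ∈ R^n, α > 0, σ̄_u ∈ (1/2, 1], v, u ∈ R^n with v^T u = 0, s = v + u, r : R^n → R convex, x ∈ R^n, and g_r ∈ ∂r(x+s) with (g + g_r)^T u + (1/α)‖u‖₂² = 0. Then g^T s + (σ̄_u/α)‖s‖₂² + r(x+s) - r(x) ≤ ‖g + g_r‖₂ ‖v‖₂ + (σ̄_u/α)‖v‖₂². -/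
open scoped RealInnerProductSpace

/-- A subgradient of a convex function. -/
def IsSubgradientAt {n : ℕ} (r : EuclideanSpace ℝ (Fin n) → ℝ)
    (z g : EuclideanSpace ℝ (Fin n)) : Prop :=
  ∀ y, r z + ⟪g, y - z⟫ ≤ r y

/-- bound on the denominator of the merit-parameter trial value. -/
theorem denominator_bound
    {n : ℕ} (g : EuclideanSpace ℝ (Fin n)) (α σu : ℝ) (hα : 0 < α)
    (hσu : σu ∈ Set.Ioc (1 / 2 : ℝ) 1)
    (v u s x gr : EuclideanSpace ℝ (Fin n))
    (hvu : ⟪v, u⟫ = 0) (hs : s = v + u)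
    (r : EuclideanSpace ℝ (Fin n) → ℝ) (hr : ConvexOn ℝ Set.univ r)
    (hgr : IsSubgradientAt r (x + s) gr)
    (hopt : ⟪g + gr, u⟫ + (1 / α) * ‖u‖ ^ 2 = 0) :
    ⟪g, s⟫ + (σu / α) * ‖s‖ ^ 2 + r (x + s) - r x ≤
      ‖g + gr‖ * ‖v‖ + (σu / α) * ‖v‖ ^ 2 := by
  obtain ⟨hσ1, hσ2⟩ := hσu
  have h1 := hgr x
  have hx : x - (x + s) = -s := by abel
  rw [hx, inner_neg_right] at h1
  -- r (x+s) - r x ≤ ⟪gr, s⟫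
  have h1' : r (x + s) - r x ≤ ⟪gr, s⟫ := by linarith
  have hnorm : ‖s‖ ^ 2 = ‖v‖ ^ 2 + ‖u‖ ^ 2 := by
    rw [hs, @norm_add_sq_real, hvu]; ring
  have hsplit : ⟪g + gr, s⟫ = ⟪g + gr, v⟫ + ⟪g + gr, u⟫ := by
    rw [hs, inner_add_right]
  have hgs : ⟪g, s⟫ = ⟪g + gr, s⟫ - ⟪gr, s⟫ := by
    rw [inner_add_left]; ring
  have hcs : ⟪g + gr, v⟫ ≤ ‖g + gr‖ * ‖v‖ := real_inner_le_norm _ _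
  have hu2 : (0:ℝ) ≤ ‖u‖ ^ 2 := sq_nonneg _
  have hα' : (0:ℝ) < 1 / α := by positivity
  have hkey : 0 ≤ (1 - σu) * (1 / α) * ‖u‖ ^ 2 :=
    mul_nonneg (mul_nonneg (by linarith) hα'.le) hu2
  have hdiv : σu / α = σu * (1 / α) := by ring
  have hnorm' : σu * (1 / α) * ‖s‖ ^ 2 =
      σu * (1 / α) * ‖v‖ ^ 2 + σu * (1 / α) * ‖u‖ ^ 2 := by rw [hnorm]; ring
  have hkey' : σu * (1 / α) * ‖u‖ ^ 2 ≤ (1 / α) * ‖u‖ ^ 2 := by nlinarith [hkey]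
  rw [hdiv]
  linarith
end

section
/- Let J ∈ R^{m×n} with smallest singular value σ_min(J) ≥ σ > 0 and ‖J‖₂ ≤ κ, and let c ∈ R^m with J^T c ≠ 0. For κ_v > 0 and α > 0, the Cauchy point v^c = -β^c J^T c with β^c = min{‖J^Tc‖₂²/‖JJ^Tc‖₂², κ_v α} satisfies ‖c + J v^c‖₂ ≤ ρ ‖c‖₂, where ρ = sqrt( max{ 1 - κ_v α σ², 1 - σ²/κ² } ) ∈ [0,1). -/
set_option maxHeartbeats 1000000

open scoped RealInnerProductSpace

/-- linearized feasibility contraction at the Cauchy point under strong LICQ. -/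
theorem cauchy_point_contraction
    {m n : ℕ} (J : Matrix (Fin m) (Fin n) ℝ) (c : EuclideanSpace ℝ (Fin m))
    (σ κ : ℝ) (hσ : 0 < σ) (hκ : 0 < κ)
    (hσmin : ∀ w : EuclideanSpace ℝ (Fin m), σ * ‖w‖ ≤ ‖Matrix.toEuclideanLin J.transpose w‖)
    (hκop : ∀ v : EuclideanSpace ℝ (Fin n), ‖Matrix.toEuclideanLin J v‖ ≤ κ * ‖v‖)
    (hJc : Matrix.toEuclideanLin J.transpose c ≠ 0)
    (κv α : ℝ) (hκv : 0 < κv) (hα : 0 < α)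
    (βc : ℝ)
    (hβc : βc = min (‖Matrix.toEuclideanLin J.transpose c‖ ^ 2 /
        ‖Matrix.toEuclideanLin J (Matrix.toEuclideanLin J.transpose c)‖ ^ 2) (κv * α))
    (ρ : ℝ)
    (hρ : ρ = Real.sqrt (max (1 - κv * α * σ ^ 2) (1 - σ ^ 2 / κ ^ 2))) :
    ρ ∈ Set.Ico (0 : ℝ) 1 ∧
      ‖c + Matrix.toEuclideanLin J (-βc • Matrix.toEuclideanLin J.transpose c)‖ ≤ ρ * ‖c‖ := by
  set g : EuclideanSpace ℝ (Fin n) := Matrix.toEuclideanLin J.transpose c with hg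
  set w : EuclideanSpace ℝ (Fin m) := Matrix.toEuclideanLin J g with hw
  have hT : J.transpose = J.conjTranspose := by
    ext i j; simp [Matrix.conjTranspose_apply]
  have hinner : ⟪c, w⟫ = ‖g‖ ^ 2 := by
    rw [hw, hg, hT, Matrix.toEuclideanLin_conjTranspose_eq_adjoint,
      ← LinearMap.adjoint_inner_left]
    rw [real_inner_self_eq_norm_sq]
  have hgpos : 0 < ‖g‖ := norm_pos_iff.mpr hJc
  have hcpos : 0 < ‖c‖ := by
    rcases eq_or_ne c 0 with rfl | h
    · exact absurd (by simp [hg]) hJc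
    · exact norm_pos_iff.mpr h
  have hwpos : 0 < ‖w‖ := by
    rcases eq_or_ne w 0 with h | h
    · exfalso; rw [h] at hinner; simp at hinner; nlinarith
    · exact norm_pos_iff.mpr h
  have hwle : ‖w‖ ≤ κ * ‖g‖ := hκop g
  have hgge : σ * ‖c‖ ≤ ‖g‖ := hσmin c
  -- norm squared expansion
  have hv : c + Matrix.toEuclideanLin J (-βc • g) = c - βc • w := by
    rw [map_smul]; module
  have hφ : ‖c + Matrix.toEuclideanLin J (-βc • g)‖ ^ 2
      = ‖c‖ ^ 2 - 2 * βc * ‖g‖ ^ 2 + βc ^ 2 * ‖w‖ ^ 2 := by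
    rw [hv, norm_sub_sq_real, real_inner_smul_right, hinner, norm_smul]
    simp [mul_pow]
    ring
  set M : ℝ := max (1 - κv * α * σ ^ 2) (1 - σ ^ 2 / κ ^ 2) with hM
  have hkey : ‖c + Matrix.toEuclideanLin J (-βc • g)‖ ^ 2 ≤ M * ‖c‖ ^ 2 := by
    rw [hφ]
    rcases min_cases (‖g‖ ^ 2 / ‖w‖ ^ 2) (κv * α) with ⟨h1, h2⟩ | ⟨h1, h2⟩
    · -- βc = ‖g‖²/‖w‖² case
      rw [hβc, h1]
      have hle : (1 - σ ^ 2 / κ ^ 2) ≤ M := le_max_right _ _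
      have hκ2 : (0:ℝ) < κ ^ 2 := by positivity
      have hw2 : (0:ℝ) < ‖w‖ ^ 2 := by positivity
      have e1 : ‖c‖ ^ 2 - 2 * (‖g‖ ^ 2 / ‖w‖ ^ 2) * ‖g‖ ^ 2
          + (‖g‖ ^ 2 / ‖w‖ ^ 2) ^ 2 * ‖w‖ ^ 2
          = ‖c‖ ^ 2 - ‖g‖ ^ 2 * ‖g‖ ^ 2 / ‖w‖ ^ 2 := by
        field_simp; ring
      rw [e1]
      have h3 : σ ^ 2 * ‖c‖ ^ 2 / κ ^ 2 ≤ ‖g‖ ^ 2 * ‖g‖ ^ 2 / ‖w‖ ^ 2 := by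
        rw [div_le_div_iff₀ hκ2 hw2]
        have hw2le : ‖w‖ ^ 2 ≤ κ ^ 2 * ‖g‖ ^ 2 :=
          (pow_le_pow_left₀ (norm_nonneg w) hwle 2).trans_eq (mul_pow κ ‖g‖ 2)
        have hg2ge : σ ^ 2 * ‖c‖ ^ 2 ≤ ‖g‖ ^ 2 := by
          have := pow_le_pow_left₀ (le_of_lt (mul_pos hσ hcpos)) hgge 2
          calc σ ^ 2 * ‖c‖ ^ 2 = (σ * ‖c‖) ^ 2 := (mul_pow σ ‖c‖ 2).symm
            _ ≤ ‖g‖ ^ 2 := this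
        have key := mul_le_mul hg2ge hw2le (sq_nonneg ‖w‖) (sq_nonneg ‖g‖)
        nlinarith [key]
      calc ‖c‖ ^ 2 - ‖g‖ ^ 2 * ‖g‖ ^ 2 / ‖w‖ ^ 2
          ≤ ‖c‖ ^ 2 - σ ^ 2 * ‖c‖ ^ 2 / κ ^ 2 := by linarith
        _ = (1 - σ ^ 2 / κ ^ 2) * ‖c‖ ^ 2 := by field_simp
        _ ≤ M * ‖c‖ ^ 2 := mul_le_mul_of_nonneg_right hle (by positivity)
    · -- βc = κv α case
      rw [hβc, h1]
      have hle : (1 - κv * α * σ ^ 2) ≤ M := le_max_left _ _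
      have hw2 : (0:ℝ) < ‖w‖ ^ 2 := by positivity
      have h2' : κv * α * ‖w‖ ^ 2 ≤ ‖g‖ ^ 2 := (le_div_iff₀ hw2).mp h2.le
      have hka : 0 < κv * α := by positivity
      have hg2 : σ ^ 2 * ‖c‖ ^ 2 ≤ ‖g‖ ^ 2 := by
        have h := pow_le_pow_left₀ (le_of_lt (mul_pos hσ hcpos)) hgge 2
        calc σ ^ 2 * ‖c‖ ^ 2 = (σ * ‖c‖) ^ 2 := (mul_pow σ ‖c‖ 2).symm
          _ ≤ ‖g‖ ^ 2 := h
      have t1 : (κv * α) ^ 2 * ‖w‖ ^ 2 ≤ (κv * α) * ‖g‖ ^ 2 := by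
        calc (κv * α) ^ 2 * ‖w‖ ^ 2 = (κv * α) * (κv * α * ‖w‖ ^ 2) := by ring
          _ ≤ (κv * α) * ‖g‖ ^ 2 := mul_le_mul_of_nonneg_left h2' hka.le
      have t2 : (κv * α) * (σ ^ 2 * ‖c‖ ^ 2) ≤ (κv * α) * ‖g‖ ^ 2 :=
        mul_le_mul_of_nonneg_left hg2 hka.le
      have : ‖c‖ ^ 2 - 2 * (κv * α) * ‖g‖ ^ 2 + (κv * α) ^ 2 * ‖w‖ ^ 2
          ≤ (1 - κv * α * σ ^ 2) * ‖c‖ ^ 2 := by nlinarith [t1, t2]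
      have := mul_le_mul_of_nonneg_right hle (sq_nonneg ‖c‖)
      linarith
  have hMnn : 0 ≤ M := by
    have h0 : (0:ℝ) ≤ ‖c + Matrix.toEuclideanLin J (-βc • g)‖ ^ 2 := by positivity
    have hc2 : (0:ℝ) < ‖c‖ ^ 2 := by positivity
    nlinarith [hkey, h0, hc2]
  have hM1 : M < 1 := by
    apply max_lt
    · nlinarith [mul_pos (mul_pos hκv hα) (mul_pos hσ hσ)]
    · have : 0 < σ ^ 2 / κ ^ 2 := by positivity
      linarith
  have hρ2 : ρ ^ 2 = M := by rw [hρ, Real.sq_sqrt hMnn]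
  have hρnn : 0 ≤ ρ := hρ ▸ Real.sqrt_nonneg _
  refine ⟨⟨hρnn, ?_⟩, ?_⟩
  · rw [hρ]
    exact (Real.sqrt_lt' one_pos).mpr (by rw [one_pow]; exact hM1)
  · have h1 : ‖c + Matrix.toEuclideanLin J (-βc • g)‖ ^ 2 ≤ (ρ * ‖c‖) ^ 2 := by
      rw [mul_pow, hρ2]; exact hkey
    nlinarith [norm_nonneg (c + Matrix.toEuclideanLin J (-βc • g)),
      mul_nonneg hρnn (norm_nonneg c)]
end

section
/- Let g ∈ R^n, α > 0, J ∈ R^{m×n} with σ_min(J) ≥ σ > 0, r convex with ∂r bounded by κ_r and ‖g‖₂ ≤ κ_g. Suppose u, g_r, y satisfy g + (1/α)u + g_r - J^T y = 0 and Ju = 0 with g_r ∈ ∂r(z) for some z. Then ‖y‖₂ ≤ (2/σ)(κ_g + κ_r). -/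
open scoped RealInnerProductSpace

/-- boundedness of the Lagrange multiplier estimates. -/
theorem lagrange_multiplier_bound
    {m n : ℕ} (g : EuclideanSpace ℝ (Fin n)) (α : ℝ) (hα : 0 < α)
    (J : Matrix (Fin m) (Fin n) ℝ) (σ : ℝ) (hσ : 0 < σ)
    (hσmin : ∀ w : EuclideanSpace ℝ (Fin m), σ * ‖w‖ ≤ ‖Matrix.toEuclideanLin J.transpose w‖)
    (r : EuclideanSpace ℝ (Fin n) → ℝ) (hr : ConvexOn ℝ Set.univ r)
    (κg κr : ℝ) (hg : ‖g‖ ≤ κg)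
    (u gr z : EuclideanSpace ℝ (Fin n)) (y : EuclideanSpace ℝ (Fin m))
    (hgr : IsSubgradientAt r z gr) (hgrbd : ‖gr‖ ≤ κr)
    (hstat : g + (1 / α) • u + gr - Matrix.toEuclideanLin J.transpose y = 0)
    (hJu : Matrix.toEuclideanLin J u = 0) :
    ‖y‖ ≤ (2 / σ) * (κg + κr) := by
  have heq : Matrix.toEuclideanLin J.transpose y = g + (1 / α) • u + gr :=
    (sub_eq_zero.mp hstat).symm
  -- adjoint relation
  have htr : J.transpose = J.conjTranspose := by
    ext i j; simp [Matrix.conjTranspose_apply, Matrix.transpose_apply]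
  have hadj : ⟪Matrix.toEuclideanLin J.transpose y, u⟫ = 0 := by
    rw [htr, Matrix.toEuclideanLin_conjTranspose_eq_adjoint,
      LinearMap.adjoint_inner_left, hJu, inner_zero_right]
  have hexp : ⟪g + gr, u⟫ + (1 / α) * ‖u‖ ^ 2 = 0 := by
    rw [heq] at hadj
    rw [← hadj]
    simp only [inner_add_left, inner_smul_left, real_inner_self_eq_norm_sq,
      starRingEnd_apply, star_trivial]
    ring
  have hκ0 : 0 ≤ κg + κr := by linarith [norm_nonneg g, norm_nonneg gr]
  have hu : (1 / α) * ‖u‖ ≤ κg + κr := by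
    rcases eq_or_ne u 0 with h | h
    · simpa [h] using hκ0
    · have hun : 0 < ‖u‖ := norm_pos_iff.mpr h
      have h1 : (1 / α) * ‖u‖ ^ 2 = -⟪g + gr, u⟫ := by linarith
      have h2 : -⟪g + gr, u⟫ ≤ ‖g + gr‖ * ‖u‖ := by
        have := abs_real_inner_le_norm (g + gr) u
        have := neg_abs_le ⟪g + gr, u⟫
        linarith [abs_nonneg ⟪g + gr, u⟫]
      have h3 : ‖g + gr‖ ≤ κg + κr := le_trans (norm_add_le _ _) (by linarith)
      have h4 : (1 / α) * ‖u‖ ^ 2 ≤ (κg + κr) * ‖u‖ := by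
        calc (1 / α) * ‖u‖ ^ 2 = -⟪g + gr, u⟫ := h1
          _ ≤ ‖g + gr‖ * ‖u‖ := h2
          _ ≤ (κg + κr) * ‖u‖ := by nlinarith
      have : (1 / α) * ‖u‖ * ‖u‖ ≤ (κg + κr) * ‖u‖ := by nlinarith
      exact le_of_mul_le_mul_right this hun
  have hbd : σ * ‖y‖ ≤ 2 * (κg + κr) := by
    have h1 := hσmin y
    have h2 : ‖Matrix.toEuclideanLin J.transpose y‖ ≤ κg + (1 / α) * ‖u‖ + κr := by
      rw [heq]
      calc ‖g + (1 / α) • u + gr‖ ≤ ‖g‖ + ‖(1 / α) • u‖ + ‖gr‖ := by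
            exact le_trans (norm_add_le _ _) (by linarith [norm_add_le g ((1/α) • u)])
        _ ≤ κg + (1 / α) * ‖u‖ + κr := by
            rw [norm_smul]
            have : ‖(1 / α : ℝ)‖ = 1 / α := abs_of_pos (by positivity)
            rw [this]; linarith
    linarith
  rw [div_mul_eq_mul_div, le_div_iff₀ hσ]
  linarith
end
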